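/- For positive definite matrices Σ₁, Σ₂, the determinant term of the multivariate Bhattacharyya distance is nonnegative: det((Σ₁+Σ₂)/2) ≥ √(det Σ₁ · det Σ₂), hence (1/2)·ln(det((Σ₁+Σ₂)/2)/√(det Σ₁ det Σ₂)) ≥ 0. -/

import Mathlib

open Matrix Finset

theorem det_avg_ge_sqrt_det_mul_det (m : ℕ)
    (S₁ S₂ : Matrix (Fin m) (Fin m) ℝ) (h₁ : S₁.PosDef) (h₂ : S₂.PosDef) :
    Real.sqrt (S₁.det * S₂.det) ≤ ((S₁ + S₂) / 2).det ∧
    0 ≤ (1/2) * Real.log (((S₁ + S₂) / 2).det / Real.sqrt (S₁.det * S₂.det)) := by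
  have hd₁ := h₁.det_pos
  have hd₂ := h₂.det_pos
  -- division by 2 is scalar smul
  have h2inv : ((1:ℝ)/2) • (2 : Matrix (Fin m) (Fin m) ℝ) = 1 := by
    have h2 : (2 : Matrix (Fin m) (Fin m) ℝ) = 1 + 1 := one_add_one_eq_two.symm
    rw [h2, smul_add]
    ext i j; by_cases h : i = j <;> simp [Matrix.smul_apply, Matrix.one_apply, h]
    norm_num
  have hdiv : (S₁ + S₂) / 2 = ((1:ℝ)/2) • (S₁ + S₂) := by
    rw [div_eq_mul_inv, Matrix.inv_eq_right_inv
      (B := ((1:ℝ)/2) • (1 : Matrix (Fin m) (Fin m) ℝ))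
      (by rw [Matrix.mul_smul, Matrix.mul_one]; exact h2inv),
      Matrix.mul_smul, Matrix.mul_one]
  -- square root of S₁
  set R := (open scoped MatrixOrder in CFC.sqrt S₁) with hRdef
  have hRR : R * R = S₁ := by
    open scoped MatrixOrder in exact CFC.sqrt_mul_sqrt_self S₁ h₁.posSemidef.nonneg
  have hRH : R.IsHermitian := by
    open scoped MatrixOrder in exact (CFC.sqrt_nonneg S₁).posSemidef.1
  have hdetR2 : R.det * R.det = S₁.det := by rw [← det_mul, hRR]
  have hdetRne : R.det ≠ 0 := by intro h; rw [h, mul_zero] at hdetR2; exact hd₁.ne hdetR2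
  have hu : IsUnit R.det := hdetRne.isUnit
  -- conjugated matrix
  set N := R⁻¹ * S₂ * R⁻¹ with hNdef
  have hN : N.PosSemidef := by
    have := h₂.posSemidef.conjTranspose_mul_mul_same R⁻¹
    rwa [conjTranspose_nonsing_inv, hRH.eq] at this
  have hsum : S₁ + S₂ = R * (1 + N) * R := by
    have hRNR : R * N * R = S₂ := by
      rw [hNdef, ← Matrix.mul_assoc, ← Matrix.mul_assoc, Matrix.mul_nonsing_inv R hu,
        Matrix.one_mul, Matrix.mul_assoc, Matrix.nonsing_inv_mul R hu, Matrix.mul_one]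
    rw [Matrix.mul_add, Matrix.mul_one, Matrix.add_mul, hRR, hRNR]
  -- eigenvalues of N
  set μ := hN.1.eigenvalues with hμdef
  have hμnn : ∀ i, 0 ≤ μ i := hN.eigenvalues_nonneg
  have hdetN : N.det = ∏ i, μ i := by
    rw [hN.1.det_eq_prod_eigenvalues]
    exact Finset.prod_congr rfl fun i _ => rfl
  have hdetNval : N.det = S₂.det / S₁.det := by
    have h5 : N.det = R.det⁻¹ * S₂.det * R.det⁻¹ := by
      rw [hNdef, det_mul, det_mul, Matrix.det_nonsing_inv, Ring.inverse_eq_inv']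
    rw [h5, ← hdetR2]
    field_simp
  -- determinant of 1 + N via spectral theorem
  have hdet1N : (1 + N).det = ∏ i, (1 + μ i) := by
    set U := (hN.1.eigenvectorUnitary : Matrix (Fin m) (Fin m) ℝ) with hUdef
    have hUU : U * star U = 1 := mem_unitaryGroup_iff.mp hN.1.eigenvectorUnitary.2
    have hUU' : star U * U = 1 := mem_unitaryGroup_iff'.mp hN.1.eigenvectorUnitary.2
    have hspec : N = U * diagonal (RCLike.ofReal ∘ μ) * star U := hN.1.spectral_theorem
    have h1N : 1 + N = U * (1 + diagonal (RCLike.ofReal ∘ μ)) * star U := by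
      rw [Matrix.mul_add, Matrix.add_mul, Matrix.mul_one, hUU, ← hspec]
    rw [h1N, det_mul, det_mul, mul_comm, ← mul_assoc, ← det_mul, hUU', det_one, one_mul]
    have : (1 + diagonal (RCLike.ofReal ∘ μ) : Matrix (Fin m) (Fin m) ℝ)
        = diagonal (fun i => 1 + μ i) := by
      rw [← diagonal_one, diagonal_add]
      congr 1
    rw [this, det_diagonal]
  -- main computation
  have hdetavg : ((S₁ + S₂) / 2).det = S₁.det * ∏ i, ((1 + μ i) / 2) := by
    rw [hdiv, det_smul, hsum, det_mul, det_mul, hdet1N, Finset.prod_div_distrib,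
      Finset.prod_const, ← hdetR2]
    simp only [Finset.card_univ, Fintype.card_fin, smul_eq_mul]
    rw [div_pow, one_pow]
    field_simp
  -- the key inequality
  have hprodpos : 0 ≤ ∏ i, ((1 + μ i) / 2) :=
    Finset.prod_nonneg fun i _ => by have := hμnn i; positivity
  have hXnn : 0 ≤ S₁.det * ∏ i, ((1 + μ i) / 2) := mul_nonneg hd₁.le hprodpos
  have hsq : S₁.det * S₂.det ≤ (S₁.det * ∏ i, ((1 + μ i) / 2))^2 := by
    have hp : ∏ i, μ i ≤ ∏ i, ((1 + μ i) / 2)^2 := by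
      apply Finset.prod_le_prod (fun i _ => hμnn i)
      intro i _
      have := hμnn i
      nlinarith [sq_nonneg (1 - μ i)]
    have h6 : S₂.det / S₁.det ≤ ∏ i, ((1 + μ i) / 2)^2 := by
      rw [← hdetN] at hp
      rw [hdetNval] at hp
      exact hp
    calc S₁.det * S₂.det = S₁.det^2 * (S₂.det / S₁.det) := by field_simp
      _ ≤ S₁.det^2 * ∏ i, ((1 + μ i) / 2)^2 := by
          apply mul_le_mul_of_nonneg_left h6 (by positivity)
      _ = (S₁.det * ∏ i, ((1 + μ i) / 2))^2 := by
          rw [mul_pow, ← Finset.prod_pow]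
  have hmain : Real.sqrt (S₁.det * S₂.det) ≤ ((S₁ + S₂) / 2).det := by
    rw [hdetavg]
    calc Real.sqrt (S₁.det * S₂.det) ≤ Real.sqrt ((S₁.det * ∏ i, ((1 + μ i) / 2))^2) :=
          Real.sqrt_le_sqrt hsq
      _ = S₁.det * ∏ i, ((1 + μ i) / 2) := Real.sqrt_sq hXnn
  refine ⟨hmain, ?_⟩
  have hsqrtpos : 0 < Real.sqrt (S₁.det * S₂.det) := Real.sqrt_pos.mpr (by positivity)
  have hlog : 0 ≤ Real.log (((S₁ + S₂) / 2).det / Real.sqrt (S₁.det * S₂.det)) :=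
    Real.log_nonneg ((one_le_div hsqrtpos).mpr hmain)
  positivity
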